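/- arXiv:2510.00834 — 7 statements merged into one kernel-verified Lean document; each statement's English description precedes it below -/
import Mathlib

section
/- Let (g,B) be a Rota-Baxter Lie algebra of weight λ and B̃ := -λ·id - B. Then ker B and ker B̃ are both ideals of the descendent Lie algebra g_B, and hence the sum ker B̃ + ker B is an ideal of g_B. -/
/-- The descendent bracket `[x,y]_B = [B x, y] + [x, B y] + λ [x,y]`. -/
def brB {K : Type*} [Field K] {g : Type*} [LieRing g] [LieAlgebra K g]
    (lam : K) (B : g →ₗ[K] g) (x y : g) : g :=
  ⁅B x, y⁆ + ⁅x, B y⁆ + lam • ⁅x, y⁆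

/-- for a Rota-Baxter Lie algebra `(g,B)` of weight `λ` with
`B̃ = -λ·id - B`, the subspaces `ker B` and `ker B̃` are ideals of the descendent
Lie algebra `g_B`, and hence so is their sum `ker B̃ + ker B`. -/
theorem stmt5 {K : Type*} [Field K] {g : Type*} [LieRing g] [LieAlgebra K g]
    (lam : K) (B : g →ₗ[K] g)
    (hB : ∀ x y : g, ⁅B x, B y⁆ = B (⁅B x, y⁆ + ⁅x, B y⁆ + lam • ⁅x, y⁆)) :
    (∀ x y : g, y ∈ LinearMap.ker B → brB lam B x y ∈ LinearMap.ker B) ∧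
    (∀ x y : g, y ∈ LinearMap.ker ((-lam) • (LinearMap.id : g →ₗ[K] g) - B) →
      brB lam B x y ∈ LinearMap.ker ((-lam) • (LinearMap.id : g →ₗ[K] g) - B)) ∧
    (∀ x y : g,
      y ∈ LinearMap.ker ((-lam) • (LinearMap.id : g →ₗ[K] g) - B) ⊔ LinearMap.ker B →
      brB lam B x y ∈
        LinearMap.ker ((-lam) • (LinearMap.id : g →ₗ[K] g) - B) ⊔ LinearMap.ker B) := by
  have h1 : ∀ x y : g, y ∈ LinearMap.ker B → brB lam B x y ∈ LinearMap.ker B := by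
    intro x y hy
    rw [LinearMap.mem_ker] at hy ⊢
    have := hB x y
    simp [brB, hy] at this ⊢
    rw [← this]
  have h2 : ∀ x y : g, y ∈ LinearMap.ker ((-lam) • (LinearMap.id : g →ₗ[K] g) - B) →
      brB lam B x y ∈ LinearMap.ker ((-lam) • (LinearMap.id : g →ₗ[K] g) - B) := by
    intro x y hy
    rw [LinearMap.mem_ker] at hy ⊢
    simp only [LinearMap.sub_apply, LinearMap.smul_apply, LinearMap.id_apply, sub_eq_zero] at hy ⊢
    have hBy : B y = -lam • y := hy.symm
    have hb : brB lam B x y = ⁅B x, y⁆ := by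
      simp [brB, hBy, smul_smul]
    have := hB x y
    rw [← brB, hb] at this
    rw [hb, ← this, hBy]
    simp
  refine ⟨h1, h2, ?_⟩
  intro x y hy
  have hlin : ∀ a b : g, brB lam B x (a + b) = brB lam B x a + brB lam B x b := by
    intro a b
    simp [brB, smul_add]
    abel
  rcases Submodule.mem_sup.mp hy with ⟨a, ha, b, hb, rfl⟩
  rw [hlin]
  exact Submodule.add_mem_sup (h2 x a ha) (h1 x b hb)
end

section
/- Let (g,B) be a Rota-Baxter Lie algebra of weight λ ≠ 0, B̃ = -λ·id - B, g₊ = im B, g₋ = im B̃. Define ρ: g₊ → End(g₋) by B(x) ▷ B̃(y) = B̃([B(x),y]) and μ: g₋ → End(g₊) by B̃(x) ▶ B(y) = B([B̃(x),y]). Then these maps are well defined and (g₊, g₋, ▷, ▶) is a matched pair of Lie algebras. -/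
/-- `B̃ = -λ·id - B`. -/
def tB {K : Type*} [Field K] {g : Type*} [LieRing g] [LieAlgebra K g]
    (lam : K) (B : g →ₗ[K] g) : g →ₗ[K] g :=
  (-lam) • (LinearMap.id : g →ₗ[K] g) - B

section Aux
variable {K : Type*} [Field K] {g : Type*} [LieRing g] [LieAlgebra K g]

lemma tB_apply (lam : K) (B : g →ₗ[K] g) (x : g) :
    tB lam B x = -(lam • x) - B x := by
  simp [tB, neg_smul]

lemma ttB (lam : K) (B : g →ₗ[K] g) : tB lam (tB lam B) = B := by
  ext x
  simp [tB_apply]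

lemma htB (lam : K) (B : g →ₗ[K] g)
    (hB : ∀ x y : g, ⁅B x, B y⁆ = B (⁅B x, y⁆ + ⁅x, B y⁆ + lam • ⁅x, y⁆)) :
    ∀ x y : g, ⁅tB lam B x, tB lam B y⁆ =
      tB lam B (⁅tB lam B x, y⁆ + ⁅x, tB lam B y⁆ + lam • ⁅x, y⁆) := by
  intro x y
  simp only [tB_apply, map_add, map_sub, map_neg, map_smul, sub_lie, lie_sub,
    neg_lie, lie_neg, smul_lie, lie_smul, hB x y, map_add, map_smul]
  module

lemma mixA (lam : K) (B : g →ₗ[K] g)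
    (hB : ∀ x y : g, ⁅B x, B y⁆ = B (⁅B x, y⁆ + ⁅x, B y⁆ + lam • ⁅x, y⁆)) :
    ∀ u x : g, tB lam B ⁅B x, u⁆ = B ⁅tB lam B u, x⁆ - ⁅tB lam B u, B x⁆ := by
  intro u x
  have hsk : ⁅B x, u⁆ = -⁅u, B x⁆ := by rw [← lie_skew]
  simp only [hsk, tB_apply, map_add, map_sub, map_neg, map_smul, sub_lie, lie_sub,
    neg_lie, lie_neg, smul_lie, lie_smul, hB u x, map_add, map_smul]
  module

lemma wd (lam : K) (B : g →ₗ[K] g)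
    (hB : ∀ x y : g, ⁅B x, B y⁆ = B (⁅B x, y⁆ + ⁅x, B y⁆ + lam • ⁅x, y⁆)) :
    ∀ x d : g, B d = -(lam • d) → tB lam B ⁅B x, d⁆ = 0 := by
  intro x d hd
  have h := hB x d
  rw [hd] at h
  simp only [lie_neg, lie_smul] at h
  rw [tB_apply]
  rw [show (⁅B x, d⁆ + -(lam • ⁅x, d⁆) + lam • ⁅x, d⁆) = ⁅B x, d⁆ by abel] at h
  rw [← h]
  module

lemma core (lam : K) (B : g →ₗ[K] g) (a x y : g) :
    ⁅a, brB lam B x y⁆ = brB lam B ⁅a, x⁆ y + brB lam B x ⁅a, y⁆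
      - ⁅x, B ⁅a, y⁆ - ⁅a, B y⁆⁆ - ⁅B ⁅a, x⁆ - ⁅a, B x⁆, y⁆ := by
  have h1 := leibniz_lie a (B x) y
  have h2 := leibniz_lie a x (B y)
  have h3 := leibniz_lie a x y
  simp only [brB, lie_add, lie_smul, add_lie, smul_lie, sub_lie, lie_sub, h1, h2, h3,
    smul_add]
  module

lemma mp2gen (lam : K) (B : g →ₗ[K] g)
    (hB : ∀ x y : g, ⁅B x, B y⁆ = B (⁅B x, y⁆ + ⁅x, B y⁆ + lam • ⁅x, y⁆)) :
    ∀ u x y : g, B ⁅tB lam B u, brB lam B x y⁆ =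
      ⁅B ⁅tB lam B u, x⁆, B y⁆ + ⁅B x, B ⁅tB lam B u, y⁆⁆ +
        B ⁅tB lam B ⁅B y, u⁆, x⁆ - B ⁅tB lam B ⁅B x, u⁆, y⁆ := by
  intro u x y
  rw [core lam B (tB lam B u) x y]
  rw [← mixA lam B hB u y, ← mixA lam B hB u x]
  have e1 : B (brB lam B ⁅tB lam B u, x⁆ y) = ⁅B ⁅tB lam B u, x⁆, B y⁆ := by
    rw [brB, ← hB]
  have e2 : B (brB lam B x ⁅tB lam B u, y⁆) = ⁅B x, B ⁅tB lam B u, y⁆⁆ := by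
    rw [brB, ← hB]
  rw [map_sub, map_sub, map_add, e1, e2, ← lie_skew x (tB lam B ⁅B y, u⁆), map_neg]
  abel

end Aux

/-- for a Rota-Baxter Lie algebra `(g,B)` of weight `λ ≠ 0`, the maps
`B(x) ▷ B̃(y) = B̃([B x, y])` and `B̃(x) ▶ B(y) = B([B̃ x, y])` are well defined on
`g₊ = im B`, `g₋ = im B̃`, they are representations (of `g₊` on `g₋` and of `g₋` on
`g₊` respectively), and `(g₊, g₋, ▷, ▶)` satisfies the matched-pair conditions,
all expressed on representatives.  (Note `[B x, B y] = B([x,y]_B)` and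
`[B̃ u, B̃ v] = B̃([u,v]_{B̃})`.) -/
theorem stmt6 {K : Type*} [Field K] {g : Type*} [LieRing g] [LieAlgebra K g]
    (lam : K) (hlam : lam ≠ 0) (B : g →ₗ[K] g)
    (hB : ∀ x y : g, ⁅B x, B y⁆ = B (⁅B x, y⁆ + ⁅x, B y⁆ + lam • ⁅x, y⁆)) :
    -- ▷ is well defined
    (∀ x x' y y' : g, B x = B x' → tB lam B y = tB lam B y' →
      tB lam B ⁅B x, y⁆ = tB lam B ⁅B x', y'⁆) ∧
    -- ▶ is well defined
    (∀ x x' y y' : g, tB lam B x = tB lam B x' → B y = B y' →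
      B ⁅tB lam B x, y⁆ = B ⁅tB lam B x', y'⁆) ∧
    -- ▷ is a representation of g₊ on g₋
    (∀ x y z : g, tB lam B ⁅B (brB lam B x y), z⁆ =
      tB lam B ⁅B x, ⁅B y, z⁆⁆ - tB lam B ⁅B y, ⁅B x, z⁆⁆) ∧
    -- ▶ is a representation of g₋ on g₊
    (∀ x y z : g, B ⁅tB lam B (brB lam (tB lam B) x y), z⁆ =
      B ⁅tB lam B x, ⁅tB lam B y, z⁆⁆ - B ⁅tB lam B y, ⁅tB lam B x, z⁆⁆) ∧
    -- matched pair condition (MP1)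
    (∀ x u v : g, tB lam B ⁅B x, brB lam (tB lam B) u v⁆ =
      ⁅tB lam B ⁅B x, u⁆, tB lam B v⁆ + ⁅tB lam B u, tB lam B ⁅B x, v⁆⁆ +
        tB lam B ⁅B ⁅tB lam B v, x⁆, u⁆ - tB lam B ⁅B ⁅tB lam B u, x⁆, v⁆) ∧
    -- matched pair condition (MP2)
    (∀ u x y : g, B ⁅tB lam B u, brB lam B x y⁆ =
      ⁅B ⁅tB lam B u, x⁆, B y⁆ + ⁅B x, B ⁅tB lam B u, y⁆⁆ +
        B ⁅tB lam B ⁅B y, u⁆, x⁆ - B ⁅tB lam B ⁅B x, u⁆, y⁆) := by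
  have htB' := htB lam B hB
  refine ⟨?_, ?_, ?_, ?_, ?_, ?_⟩
  · -- ▷ well defined
    intro x x' y y' hx hy
    rw [hx]
    have hd : B (y - y') = -(lam • (y - y')) := by
      rw [tB_apply, tB_apply] at hy
      rw [map_sub, smul_sub]
      linear_combination (norm := module) -hy
    have h0 := wd lam B hB x' (y - y') hd
    rw [lie_sub, map_sub, sub_eq_zero] at h0
    exact h0
  · -- ▶ well defined
    intro x x' y y' hx hy
    rw [hx]
    have hd : tB lam B (y - y') = -(lam • (y - y')) := by
      rw [tB_apply, map_sub, hy]
      module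
    have h0 := wd lam (tB lam B) htB' x' (y - y') hd
    rw [ttB, lie_sub, map_sub, sub_eq_zero] at h0
    exact h0
  · -- ▷ representation
    intro x y z
    have e : B (brB lam B x y) = ⁅B x, B y⁆ := by rw [brB, ← hB]
    rw [e, lie_lie, map_sub]
  · intro x y z
    have e : tB lam B (brB lam (tB lam B) x y) = ⁅tB lam B x, tB lam B y⁆ := by
      rw [brB, ← htB']
    rw [e, lie_lie, map_sub]
  · intro x u v
    have h := mp2gen lam (tB lam B) htB' x u v
    rw [ttB] at h
    exact h
  · exact mp2gen lam B hB
end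

section
/- Let (g,B) be a Rota-Baxter Lie algebra of weight λ ≠ 0 and (g₊, g₋, ▷, ▶) the matched pair of Lie algebras on (g,B) with bicrossed product bracket [·,·]_⋈ on g₊ ⊕ g₋. Then for all x,y ∈ g, [(B(x), B̃(x)), (B(y), B̃(y))]_⋈ = -λ(B([x,y]), B̃([x,y])). -/
/-- in the matched pair of Lie algebras on `(g,B)`, with the
bicrossed product bracket (written on representatives, using
`B̃(x)▶B(y) = B([B̃ x, y])` and `B(x)▷B̃(y) = B̃([B x, y])`), one has
`[(B x, B̃ x), (B y, B̃ y)]_⋈ = -λ (B [x,y], B̃ [x,y])`. -/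
theorem stmt7 {K : Type*} [Field K] {g : Type*} [LieRing g] [LieAlgebra K g]
    (lam : K) (hlam : lam ≠ 0) (B : g →ₗ[K] g)
    (hB : ∀ x y : g, ⁅B x, B y⁆ = B (⁅B x, y⁆ + ⁅x, B y⁆ + lam • ⁅x, y⁆)) :
    ∀ x y : g,
      ((⁅B x, B y⁆ + B ⁅tB lam B x, y⁆ - B ⁅tB lam B y, x⁆,
        ⁅tB lam B x, tB lam B y⁆ + tB lam B ⁅B x, y⁆ - tB lam B ⁅B y, x⁆) : g × g) =
      ((-lam) • B ⁅x, y⁆, (-lam) • tB lam B ⁅x, y⁆) := by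
  intro x y
  have h := hB x y
  simp only [map_add, map_smul] at h
  rw [Prod.mk.injEq]
  constructor <;>
  · simp only [tB, LinearMap.sub_apply, LinearMap.smul_apply, LinearMap.neg_apply, LinearMap.id_apply, map_add,
      map_sub, map_neg, map_smul, sub_lie, lie_sub, smul_lie, lie_smul, neg_smul, neg_lie,
      lie_neg, ← lie_skew y x, ← lie_skew (B y) x]
    linear_combination (norm := module) h
end

section
/- Let (g,B) and (g',B') be Rota-Baxter Lie algebras of weight -1 and f: g → g' a Lie algebra homomorphism with f∘B = B'∘f. Then the restrictions f₊: im B → im B' and f₋: im B̃ → im B̃' form a homomorphism of the induced matched pairs of Lie algebras, i.e., f₊(u▶x) = f₋(u)▶'f₊(x) and f₋(x▷u) = f₊(x)▷'f₋(u). -/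
theorem stmt8_general {K : Type*} [Field K] {g : Type*} [LieRing g] [LieAlgebra K g]
    {g' : Type*} [LieRing g'] [LieAlgebra K g']
    (B : g →ₗ[K] g) (B' : g' →ₗ[K] g')
    (f : g →ₗ⁅K⁆ g') (hf : ∀ x : g, f (B x) = B' (f x)) :
    (∀ x y : g,
      f (B ⁅((LinearMap.id : g →ₗ[K] g) - B) x, y⁆) =
        B' ⁅((LinearMap.id : g' →ₗ[K] g') - B') (f x), f y⁆) ∧
    (∀ x y : g,
      f (((LinearMap.id : g →ₗ[K] g) - B) ⁅B x, y⁆) =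
        ((LinearMap.id : g' →ₗ[K] g') - B') ⁅B' (f x), f y⁆) := by
  have hf_sub : ∀ x : g,
      f ((LinearMap.id - B : g →ₗ[K] g) x) = (LinearMap.id - B' : g' →ₗ[K] g') (f x) := by
    intro x
    simp only [LinearMap.sub_apply, LinearMap.id_apply, map_sub, hf]
  exact ⟨fun x y => by rw [hf, f.map_lie, hf_sub], fun x y => by rw [hf_sub, f.map_lie, hf]⟩

/-- a homomorphism `f` of Rota-Baxter Lie algebras of weight `-1`
restricts to a homomorphism of the induced matched pairs, i.e. (expressed on
representatives, with `B̃ = id - B`, actions `B̃(x)▶B(y) = B([B̃ x, y])` and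
`B(x)▷B̃(y) = B̃([B x, y])`): `f₊(u ▶ x) = f₋(u) ▶' f₊(x)` and
`f₋(x ▷ u) = f₊(x) ▷' f₋(u)`. -/
theorem stmt8 {K : Type*} [Field K] {g : Type*} [LieRing g] [LieAlgebra K g]
    {g' : Type*} [LieRing g'] [LieAlgebra K g']
    (B : g →ₗ[K] g) (B' : g' →ₗ[K] g')
    (hB : ∀ x y : g, ⁅B x, B y⁆ = B (⁅B x, y⁆ + ⁅x, B y⁆ - ⁅x, y⁆))
    (hB' : ∀ x y : g', ⁅B' x, B' y⁆ = B' (⁅B' x, y⁆ + ⁅x, B' y⁆ - ⁅x, y⁆))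
    (f : g →ₗ⁅K⁆ g') (hf : ∀ x : g, f (B x) = B' (f x)) :
    (∀ x y : g,
      f (B ⁅((LinearMap.id : g →ₗ[K] g) - B) x, y⁆) =
        B' ⁅((LinearMap.id : g' →ₗ[K] g') - B') (f x), f y⁆) ∧
    (∀ x y : g,
      f (((LinearMap.id : g →ₗ[K] g) - B) ⁅B x, y⁆) =
        ((LinearMap.id : g' →ₗ[K] g') - B') ⁅B' (f x), f y⁆) :=
  stmt8_general B B' f hf
end

section
/- Let (g,B) be a Rota-Baxter Lie algebra of weight λ ≠ 0 and (g₊, g₋, ▷, ▶) the matched pair of Lie algebras on (g,B). Then for all x,y ∈ g, [(-B(B̃(x)), B̃(B(x))), (-B(B̃(y)), B̃(B(y)))]_⋈ = λ(B([B̃(x),B̃(y)]), B̃([B(x),B(y)])). -/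
/-- in the matched pair of Lie algebras on `(g,B)` (weight `λ ≠ 0`),
written on representatives, one has
`[(-B(B̃ x), B̃(B x)), (-B(B̃ y), B̃(B y))]_⋈ = λ (B [B̃ x, B̃ y], B̃ [B x, B y])`. -/
theorem stmt9 {K : Type*} [Field K] {g : Type*} [LieRing g] [LieAlgebra K g]
    (lam : K) (hlam : lam ≠ 0) (B : g →ₗ[K] g)
    (hB : ∀ x y : g, ⁅B x, B y⁆ = B (⁅B x, y⁆ + ⁅x, B y⁆ + lam • ⁅x, y⁆)) :
    ∀ x y : g,
      ((⁅B (tB lam B x), B (tB lam B y)⁆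
          - B ⁅tB lam B (B x), tB lam B y⁆ + B ⁅tB lam B (B y), tB lam B x⁆,
        ⁅tB lam B (B x), tB lam B (B y)⁆
          - tB lam B ⁅B (tB lam B x), B y⁆ + tB lam B ⁅B (tB lam B y), B x⁆) : g × g) =
      (lam • B ⁅tB lam B x, tB lam B y⁆, lam • tB lam B ⁅B x, B y⁆) := by
  have hcomm : ∀ z : g, tB lam B (B z) = B (tB lam B z) := by
    intro z
    simp [tB, map_sub, map_smul]
  have hT : ∀ a b : g, ⁅tB lam B a, tB lam B b⁆
      = tB lam B (⁅tB lam B a, b⁆ + ⁅a, tB lam B b⁆ + lam • ⁅a, b⁆) := by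
    intro a b
    simp only [tB, LinearMap.sub_apply, LinearMap.smul_apply, LinearMap.id_apply,
      LinearMap.neg_apply, map_add, map_sub, map_smul, sub_lie, lie_sub, smul_lie,
      lie_smul, smul_sub, smul_add, neg_smul, neg_lie, lie_neg, sub_neg_eq_add, neg_neg]
    rw [hB a b]
    simp only [map_add, map_smul, map_neg]
    module
  intro x y
  have h1 : ⁅B (tB lam B x), B (tB lam B y)⁆
      - B ⁅tB lam B (B x), tB lam B y⁆ + B ⁅tB lam B (B y), tB lam B x⁆
      = lam • B ⁅tB lam B x, tB lam B y⁆ := by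
    rw [hB (tB lam B x) (tB lam B y), hcomm x, hcomm y,
      ← lie_skew (B (tB lam B y)) (tB lam B x)]
    simp only [map_add, map_smul, map_neg]
    abel
  have h2 : ⁅tB lam B (B x), tB lam B (B y)⁆
      - tB lam B ⁅B (tB lam B x), B y⁆ + tB lam B ⁅B (tB lam B y), B x⁆
      = lam • tB lam B ⁅B x, B y⁆ := by
    rw [hT (B x) (B y), ← hcomm x, ← hcomm y,
      ← lie_skew (tB lam B (B y)) (B x)]
    simp only [map_add, map_smul, map_neg]
    abel
  exact Prod.ext h1 h2
end

section
/- Let (g,B) be a Rota-Baxter Lie algebra of weight -1 and B̃ = id - B. Then im(B∘B̃) = im B ∩ im B̃. -/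
/-- for a Rota-Baxter Lie algebra `(g,B)` of weight `-1` and
`B̃ = id - B`, one has `im(B ∘ B̃) = im B ∩ im B̃`. -/
theorem stmt13 {K : Type*} [Field K] {g : Type*} [LieRing g] [LieAlgebra K g]
    (B : g →ₗ[K] g)
    (hB : ∀ x y : g, ⁅B x, B y⁆ = B (⁅B x, y⁆ + ⁅x, B y⁆ - ⁅x, y⁆)) :
    LinearMap.range (B ∘ₗ ((LinearMap.id : g →ₗ[K] g) - B)) =
      LinearMap.range B ⊓ LinearMap.range ((LinearMap.id : g →ₗ[K] g) - B) := by
  apply le_antisymm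
  · rintro z ⟨w, rfl⟩
    refine ⟨⟨((LinearMap.id : g →ₗ[K] g) - B) w, rfl⟩, ⟨B w, ?_⟩⟩
    simp [map_sub]
  · rintro z ⟨⟨x, hx⟩, ⟨y, hy⟩⟩
    refine ⟨x + y, ?_⟩
    have hx' : B x = z := hx
    have hy' : y - B y = z := by simpa [LinearMap.sub_apply] using hy
    have hby : B y = y - z := by rw [← hy']; abel
    simp only [LinearMap.comp_apply, LinearMap.sub_apply, LinearMap.id_apply, map_sub, map_add]
    rw [hx', hby, map_sub]
    abel_nf
    simpa [← sub_eq_add_neg] using hy'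
end

section
/- Let (G,𝓑) be a Rota-Baxter group of weight -1. Then the map 𝓑̃: G → G defined by 𝓑̃(a) = a·𝓑(a⁻¹) is also a Rota-Baxter operator of weight -1 on G. -/
/-- if `𝓑` is a Rota-Baxter operator of weight `-1` on a group `G`,
then `𝓑̃(a) = a · 𝓑(a⁻¹)` is also a Rota-Baxter operator of weight `-1` on `G`. -/
theorem stmt17 {G : Type*} [Group G] (B : G → G)
    (hB : ∀ a b : G, B a * B b = B (B a * b * (B a)⁻¹ * a)) :
    ∀ a b : G,
      (a * B a⁻¹) * (b * B b⁻¹) =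
        ((a * B a⁻¹) * b * (a * B a⁻¹)⁻¹ * a) *
          B ((a * B a⁻¹) * b * (a * B a⁻¹)⁻¹ * a)⁻¹ := by
  intro a b
  have key : ((a * B a⁻¹) * b * (a * B a⁻¹)⁻¹ * a)⁻¹
      = B a⁻¹ * b⁻¹ * (B a⁻¹)⁻¹ * a⁻¹ := by group
  rw [key, ← hB]
  group
end
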